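/- For forests f₁, f₂ over Σ: nf_𝓒(nf_𝓐(f₁)) = nf_𝓒(nf_𝓐(f₂)) if and only if f₁ and f₂ are equal modulo the associativity identities for symbols in 𝓐 and the commutativity identities for symbols in 𝓒. -/

import Mathlib

/-!
Both normal forms only ever rewrite with the identities (sorting permutes the children of a
`𝓒`-node, `φ` dissolves an `a`-node into an `a`-parent with `a ∈ 𝓐`), so `nf_𝓒(nf_𝓐(f))` is
`EqAC`-equal to `f`; this gives one direction.

For the other one, `nf_𝓒 ∘ nf_𝓐` is compatible with concatenation and kills each generator of
`EqAC`. The only delicate case is the congruence under a node `a(·)`, where `φ_a` instead of `φ_•`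
is applied to the children. But `φ_a(f)` is `φ_•(f)` with every top-level `a`-node (for `a ∈ 𝓐`)
replaced by its children, and this splicing commutes with `nf_𝓒` up to a permutation, which the
sorting below a `𝓒`-node removes. Sorting depends only on the multiset of children because the
term representation is a prefix code, hence injective, so `<llex` totally orders trees.
-/


inductive RTree (σ : Type) : Type
  | node : σ → List (RTree σ) → RTree σ

/-- The alphabet `Σ ∪ {(, )}`: `⊥` is `'('`, `(⊥ : WithBot σ)` is `')'` and
`letter a` is the letter `a ∈ Σ`.  If `σ` is linearly ordered, this alphabet
carries the induced linear order. -/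
abbrev TSym (σ : Type) : Type := WithBot (WithBot σ)

def lparen {σ : Type} : TSym σ := ⊥
def rparen {σ : Type} : TSym σ := ((⊥ : WithBot σ) : TSym σ)
def letter {σ : Type} (a : σ) : TSym σ := ((a : WithBot σ) : TSym σ)

mutual
/-- The term representation of a tree as a string over `Σ ∪ {(, )}`:
`rep(a(f)) = a ( rep(f) )`. -/
def repT {σ : Type} : RTree σ → List (TSym σ)
  | .node a l => letter a :: lparen :: (repF l ++ [rparen])
/-- The term representation of a forest: `rep(t₁ ⋯ tₙ) = rep(t₁) ⋯ rep(tₙ)`. -/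
def repF {σ : Type} : List (RTree σ) → List (TSym σ)
  | [] => []
  | t :: ts => repT t ++ repF ts
end

/-- The length-lexicographic order on strings induced by an order `r`. -/
def llex {α : Type} (r : α → α → Prop) (x y : List α) : Prop :=
  x.length < y.length ∨ (x.length = y.length ∧ List.Lex r x y)

instance {α : Type} [DecidableEq α] (r : α → α → Prop) [DecidableRel r] :
    DecidableRel (llex r) := fun _ _ => by unfold llex; infer_instance

/-- The Boolean comparison used for sorting sibling trees: `s ≤ t` iff
`rep(t)` is not length-lexicographically smaller than `rep(s)`. -/
def leTree {σ : Type} [LinearOrder σ] (s t : RTree σ) : Bool :=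
  decide (¬ llex (· < ·) (repT t) (repT s))

/-- Sort a list of sibling trees by the length-lexicographic order of their
term representations. -/
def sortTrees {σ : Type} [LinearOrder σ] (l : List (RTree σ)) : List (RTree σ) :=
  l.mergeSort leTree

mutual
/-- The commutative normal form: below a `𝓒`-labelled node, the children are
sorted with respect to `<llex` of their term representations. -/
def nfCT {σ : Type} [LinearOrder σ] (C : Set σ) [DecidablePred (· ∈ C)] :
    RTree σ → RTree σ
  | .node a l => .node a (if a ∈ C then sortTrees (nfCF C l) else nfCF C l)
/-- The commutative normal form of a forest. -/
def nfCF {σ : Type} [LinearOrder σ] (C : Set σ) [DecidablePred (· ∈ C)] :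
    List (RTree σ) → List (RTree σ)
  | [] => []
  | t :: ts => nfCT C t :: nfCF C ts
end
mutual
/-- `φ_a` on trees, where `a : Option σ` ranges over `Σ ∪ {•}` (`none` is `•`):
`φ_a(b(f)) = φ_a(f)` if `a = b ∈ 𝓐`, and `φ_a(b(f)) = b(φ_b(f))` otherwise. -/
def phiT {σ : Type} [DecidableEq σ] (A : Set σ) [DecidablePred (· ∈ A)] :
    Option σ → RTree σ → List (RTree σ)
  | a, .node b f =>
      if a = some b ∧ b ∈ A then phiF A a f else [.node b (phiF A (some b) f)]
/-- `φ_a` extended homomorphically to forests. -/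
def phiF {σ : Type} [DecidableEq σ] (A : Set σ) [DecidablePred (· ∈ A)] :
    Option σ → List (RTree σ) → List (RTree σ)
  | _, [] => []
  | a, t :: ts => phiT A a t ++ phiF A a ts
end

/-- The associative normal form `nf_𝓐(f) = φ_•(f)`. -/
def nfA {σ : Type} [DecidableEq σ] (A : Set σ) [DecidablePred (· ∈ A)]
    (f : List (RTree σ)) : List (RTree σ) :=
  phiF A none f

/-- Equality of forests modulo associativity (for `a ∈ 𝓐`) and commutativity
(for `c ∈ 𝓒`): the smallest congruence containing all instances of
`a(t₁ ⋯ tₙ) = a(t₁ ⋯ tᵢ₋₁ a(tᵢ ⋯ tⱼ₋₁) tⱼ ⋯ tₙ)` and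
`c(t₁ ⋯ tₙ) = c(t_{σ(1)} ⋯ t_{σ(n)})`. -/
inductive EqAC {σ : Type} (A C : Set σ) : List (RTree σ) → List (RTree σ) → Prop
  | assoc {a : σ} {f g h : List (RTree σ)} :
      a ∈ A → EqAC A C [.node a (f ++ g ++ h)] [.node a (f ++ .node a g :: h)]
  | comm {c : σ} {l l' : List (RTree σ)} :
      c ∈ C → l.Perm l' → EqAC A C [.node c l] [.node c l']
  | refl (f : List (RTree σ)) : EqAC A C f f
  | symm {f g : List (RTree σ)} : EqAC A C f g → EqAC A C g f
  | trans {f g h : List (RTree σ)} : EqAC A C f g → EqAC A C g h → EqAC A C f h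
  | congrNode {a : σ} {f g : List (RTree σ)} :
      EqAC A C f g → EqAC A C [.node a f] [.node a g]
  | congrConcat {f f' g g' : List (RTree σ)} :
      EqAC A C f f' → EqAC A C g g' → EqAC A C (f ++ g) (f' ++ g')

section Representation
variable {σ : Type}

mutual
theorem repT_append_inj : ∀ {s t : RTree σ} {u v : List (TSym σ)},
    repT s ++ u = repT t ++ v → s = t ∧ u = v
  | .node a f, .node b g, u, v, h => by
    simp only [repT, List.cons_append, List.append_assoc, List.cons.injEq] at h
    obtain ⟨hab, -, h⟩ := h
    obtain ⟨rfl, h⟩ := repF_append_inj h (by simp [letter, rparen]) (by simp [letter, rparen])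
    simp_all [letter]

theorem repF_append_inj : ∀ {l l' : List (RTree σ)} {u v : List (TSym σ)},
    repF l ++ u = repF l' ++ v → (∀ a, u.head? ≠ some (letter a)) →
      (∀ a, v.head? ≠ some (letter a)) → l = l' ∧ u = v
  | [], [], _, _, h, _, _ => ⟨rfl, h⟩
  | [], .node a _ :: _, _, _, h, hu, _ => by
    simp only [repF, repT, List.nil_append, List.cons_append] at h
    exact absurd (by simp [h]) (hu a)
  | .node a _ :: _, [], _, _, h, _, hv => by
    simp only [repF, repT, List.nil_append, List.cons_append] at h
    exact absurd (by simp [← h]) (hv a)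
  | t :: ts, t' :: ts', u, v, h, hu, hv => by
    simp only [repF, List.append_assoc] at h
    obtain ⟨rfl, hrest⟩ := repT_append_inj h
    obtain ⟨rfl, rfl⟩ := repF_append_inj hrest hu hv
    exact ⟨rfl, rfl⟩
end

theorem repT_injective : Function.Injective (repT (σ := σ)) := fun _ _ h =>
  (repT_append_inj (u := []) (v := []) (by simpa)).1

end Representation

theorem List.mergeSort_eq_of_perm_of_injective {α β : Type*} [LinearOrder β] {key : α → β}
    (hkey : Function.Injective key) {l l' : List α} (h : l.Perm l') :
    l.mergeSort (fun a b => decide (key a ≤ key b)) =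
      l'.mergeSort (fun a b => decide (key a ≤ key b)) := by
  have trans (a b c : α) : decide (key a ≤ key b) → decide (key b ≤ key c) →
      decide (key a ≤ key c) := by simpa using le_trans
  have total (a b : α) : (decide (key a ≤ key b) || decide (key b ≤ key a)) := by
    simpa using le_total _ _
  refine List.Perm.eq_of_pairwise (fun a b _ _ hab hba => hkey (le_antisymm ?_ ?_))
    (List.pairwise_mergeSort trans total l) (List.pairwise_mergeSort trans total l')
    (((l.mergeSort_perm _).trans h).trans (l'.mergeSort_perm _).symm)
  · simpa using hab
  · simpa using hba

theorem llex_iff_toLex_lt {α : Type} [LinearOrder α] {x y : List α} :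
    llex (· < ·) x y ↔ toLex (x.length, x) < toLex (y.length, y) := by
  rw [Prod.Lex.toLex_lt_toLex]
  rfl

section Sorting
variable {σ : Type} [LinearOrder σ]

theorem leTree_eq_decide_le : leTree (σ := σ) = fun s t =>
    decide (toLex ((repT s).length, repT s) ≤ toLex ((repT t).length, repT t)) := by
  funext s t
  simp only [leTree, llex_iff_toLex_lt, not_lt]

theorem sortTrees_eq_of_perm {l l' : List (RTree σ)} (h : l.Perm l') :
    sortTrees l = sortTrees l' := by
  rw [sortTrees, sortTrees, leTree_eq_decide_le]
  exact List.mergeSort_eq_of_perm_of_injective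
    (fun _ _ hst => repT_injective (congrArg (fun p => (ofLex p).2) hst)) h

theorem sortTrees_perm (l : List (RTree σ)) : (sortTrees l).Perm l :=
  l.mergeSort_perm leTree

end Sorting

section Assoc
variable {σ : Type} [DecidableEq σ] (A : Set σ) [DecidablePred (· ∈ A)]

theorem phiF_eq_flatMap (a : Option σ) (l : List (RTree σ)) :
    phiF A a l = l.flatMap (phiT A a) := by
  induction l with
  | nil => simp [phiF]
  | cons t ts ih => simp [phiF, ih]

theorem phiF_append (a : Option σ) (l₁ l₂ : List (RTree σ)) :
    phiF A a (l₁ ++ l₂) = phiF A a l₁ ++ phiF A a l₂ := by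
  simp [phiF_eq_flatMap]

theorem phiF_perm (a : Option σ) {l l' : List (RTree σ)} (h : l.Perm l') :
    (phiF A a l).Perm (phiF A a l') := by
  simpa only [phiF_eq_flatMap] using h.flatMap_right _

theorem phiT_none (b : σ) (f : List (RTree σ)) :
    phiT A none (.node b f) = [.node b (phiF A (some b) f)] := by
  simp [phiT]

def spliceT (a : σ) : RTree σ → List (RTree σ)
  | .node b f => if b = a ∧ a ∈ A then f else [.node b f]

theorem phiT_some (a : σ) (t : RTree σ) :
    phiT A (some a) t = (phiT A none t).flatMap (spliceT A a) := by
  obtain ⟨b, f⟩ := t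
  by_cases h : b = a ∧ a ∈ A
  · obtain ⟨rfl, hA⟩ := h
    simp [phiT, spliceT, hA]
  · have h' : ¬(a = b ∧ b ∈ A) := fun ⟨hab, hb⟩ => h ⟨hab.symm, hab ▸ hb⟩
    simp [phiT, spliceT, h, h']

theorem phiF_some (a : σ) (l : List (RTree σ)) :
    phiF A (some a) l = (phiF A none l).flatMap (spliceT A a) := by
  simp only [phiF_eq_flatMap, List.flatMap_assoc, ← phiT_some]

theorem phiF_none_assoc {a : σ} (ha : a ∈ A) (f g h : List (RTree σ)) :
    phiF A none [.node a (f ++ g ++ h)] = phiF A none [.node a (f ++ .node a g :: h)] := by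
  simp [phiF_eq_flatMap, phiT, ha]

end Assoc

section Comm
variable {σ : Type} [LinearOrder σ] (C : Set σ) [DecidablePred (· ∈ C)]

theorem nfCF_eq_map (l : List (RTree σ)) : nfCF C l = l.map (nfCT C) := by
  induction l with
  | nil => simp [nfCF]
  | cons t ts ih => simp [nfCF, ih]

theorem nfCF_append (l₁ l₂ : List (RTree σ)) :
    nfCF C (l₁ ++ l₂) = nfCF C l₁ ++ nfCF C l₂ := by
  simp [nfCF_eq_map]

theorem nfCF_perm {l l' : List (RTree σ)} (h : l.Perm l') : (nfCF C l).Perm (nfCF C l') := by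
  simpa only [nfCF_eq_map] using h.map _

theorem nfCT_node (a : σ) (f : List (RTree σ)) :
    nfCT C (.node a f) = .node a (if a ∈ C then sortTrees (nfCF C f) else nfCF C f) := by
  simp [nfCT]

end Comm

section Soundness
variable {σ : Type} [LinearOrder σ] (A C : Set σ) [DecidablePred (· ∈ A)] [DecidablePred (· ∈ C)]

theorem nfCF_spliceT_perm (a : σ) (t : RTree σ) :
    (nfCF C (spliceT A a t)).Perm (spliceT A a (nfCT C t)) := by
  obtain ⟨b, f⟩ := t
  by_cases h : b = a ∧ a ∈ A
  · simp only [spliceT, nfCT_node, if_pos h]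
    split_ifs
    · exact (sortTrees_perm _).symm
    · rfl
  · simp [spliceT, nfCT_node, h, nfCF]

theorem nfCF_spliceT_of_not_mem {a : σ} (ha : a ∉ C) (t : RTree σ) :
    nfCF C (spliceT A a t) = spliceT A a (nfCT C t) := by
  obtain ⟨b, f⟩ := t
  by_cases h : b = a ∧ a ∈ A
  · simp [spliceT, nfCT_node, h, ha]
  · simp [spliceT, nfCT_node, h, nfCF]

theorem nfCF_flatMap_spliceT_perm (a : σ) (l : List (RTree σ)) :
    (nfCF C (l.flatMap (spliceT A a))).Perm ((nfCF C l).flatMap (spliceT A a)) := by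
  rw [nfCF_eq_map, nfCF_eq_map, List.map_flatMap, List.flatMap_map]
  exact List.Perm.flatMap_left l fun t _ => by
    simpa [nfCF_eq_map] using nfCF_spliceT_perm A C a t

theorem nfCF_flatMap_spliceT_of_not_mem {a : σ} (ha : a ∉ C) (l : List (RTree σ)) :
    nfCF C (l.flatMap (spliceT A a)) = (nfCF C l).flatMap (spliceT A a) := by
  rw [nfCF_eq_map, nfCF_eq_map, List.map_flatMap, List.flatMap_map]
  exact List.flatMap_congr fun t _ => by
    simpa [nfCF_eq_map] using nfCF_spliceT_of_not_mem A C ha t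

theorem nfCF_phiF_some_perm {a : σ} {f g : List (RTree σ)}
    (h : nfCF C (phiF A none f) = nfCF C (phiF A none g)) :
    (nfCF C (phiF A (some a) f)).Perm (nfCF C (phiF A (some a) g)) := by
  simp only [phiF_some]
  exact (nfCF_flatMap_spliceT_perm A C a _).trans
    (h ▸ (nfCF_flatMap_spliceT_perm A C a _).symm)

theorem nfCF_phiF_some_of_not_mem {a : σ} (ha : a ∉ C) {f g : List (RTree σ)}
    (h : nfCF C (phiF A none f) = nfCF C (phiF A none g)) :
    nfCF C (phiF A (some a) f) = nfCF C (phiF A (some a) g) := by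
  simp only [phiF_some, nfCF_flatMap_spliceT_of_not_mem A C ha, h]

theorem nfCF_phiF_none_node (a : σ) (f : List (RTree σ)) :
    nfCF C (phiF A none [.node a f]) =
      [.node a (if a ∈ C then sortTrees (nfCF C (phiF A (some a) f))
        else nfCF C (phiF A (some a) f))] := by
  simp [phiF_eq_flatMap, phiT_none, nfCF_eq_map, nfCT_node]

theorem nfCF_phiF_none_eq_of_eqAC {f₁ f₂ : List (RTree σ)} (h : EqAC A C f₁ f₂) :
    nfCF C (phiF A none f₁) = nfCF C (phiF A none f₂) := by
  induction h with
  | assoc ha => rw [phiF_none_assoc A ha]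
  | comm hc hl =>
    rw [nfCF_phiF_none_node, nfCF_phiF_none_node, if_pos hc, if_pos hc,
      sortTrees_eq_of_perm (nfCF_perm C (phiF_perm A _ hl))]
  | refl => rfl
  | symm _ ih => exact ih.symm
  | trans _ _ ih₁ ih₂ => exact ih₁.trans ih₂
  | congrNode _ ih =>
    rw [nfCF_phiF_none_node, nfCF_phiF_none_node]
    split_ifs with ha
    · rw [sortTrees_eq_of_perm (nfCF_phiF_some_perm A C ih)]
    · rw [nfCF_phiF_some_of_not_mem A C ha ih]
  | congrConcat _ _ ih₁ ih₂ => rw [phiF_append, phiF_append, nfCF_append, nfCF_append, ih₁, ih₂]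

end Soundness

theorem EqAC.append_left {σ : Type} {A C : Set σ} {f g : List (RTree σ)} (p : List (RTree σ))
    (h : EqAC A C f g) : EqAC A C (p ++ f) (p ++ g) :=
  (EqAC.refl p).congrConcat h

section CommCompleteness
variable {σ : Type} [LinearOrder σ] (A C : Set σ) [DecidablePred (· ∈ C)]

mutual
theorem eqAC_nfCT : ∀ t : RTree σ, EqAC A C [nfCT C t] [t]
  | .node c g => by
    have hg : EqAC A C [.node c (nfCF C g)] [.node c g] := (eqAC_nfCF g).congrNode
    rw [nfCT_node]
    split_ifs with hc
    · exact (EqAC.comm hc (sortTrees_perm _)).trans hg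
    · exact hg

theorem eqAC_nfCF : ∀ f : List (RTree σ), EqAC A C (nfCF C f) f
  | [] => EqAC.refl _
  | t :: ts => (eqAC_nfCT t).congrConcat (eqAC_nfCF ts)
end

end CommCompleteness

section AssocCompleteness
variable {σ : Type} [DecidableEq σ] (A C : Set σ) [DecidablePred (· ∈ A)]

-- An associativity step rewrites the whole child list of the `b`-node, so the recursion has to
-- carry the already processed siblings `p` and the remaining ones `q`.
mutual
theorem eqAC_node_phiT_some : ∀ (b : σ) (t : RTree σ) (p q : List (RTree σ)),
    EqAC A C [.node b (p ++ phiT A (some b) t ++ q)] [.node b (p ++ t :: q)]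
  | b, .node c g, p, q => by
    by_cases h : b = c ∧ c ∈ A
    · obtain ⟨rfl, hb⟩ := h
      simp only [phiT, true_and, hb, if_true]
      exact (eqAC_node_phiF_some b g p q).trans (EqAC.assoc hb)
    · have h' : ¬(some b = some c ∧ c ∈ A) := by simpa using h
      simp only [phiT, h', if_false]
      have hc : EqAC A C [.node c (phiF A (some c) g)] [.node c g] := by
        simpa using eqAC_node_phiF_some c g [] []
      simpa using ((hc.congrConcat (EqAC.refl q)).append_left p).congrNode (a := b)

theorem eqAC_node_phiF_some : ∀ (b : σ) (f p q : List (RTree σ)),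
    EqAC A C [.node b (p ++ phiF A (some b) f ++ q)] [.node b (p ++ f ++ q)]
  | b, [], p, q => by simpa [phiF] using EqAC.refl _
  | b, t :: ts, p, q => by
    have ht := eqAC_node_phiT_some b t p (phiF A (some b) ts ++ q)
    have hts := eqAC_node_phiF_some b ts (p ++ [t]) q
    simp only [List.append_assoc, List.singleton_append] at ht hts
    simpa [phiF] using ht.trans hts
end

theorem eqAC_phiF_none (f : List (RTree σ)) : EqAC A C (phiF A none f) f := by
  induction f with
  | nil => exact EqAC.refl _
  | cons t ts ih =>
    obtain ⟨c, g⟩ := t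
    have hg : EqAC A C [.node c (phiF A (some c) g)] [.node c g] := by
      simpa using eqAC_node_phiF_some A C c g [] []
    simpa [phiF, phiT_none] using hg.congrConcat ih

end AssocCompleteness

/-- `nf_𝓒(nf_𝓐(f₁)) = nf_𝓒(nf_𝓐(f₂))` iff `f₁` and `f₂` are equal modulo the
associativity identities for `𝓐` and the commutativity identities for `𝓒`. -/
theorem nfC_nfA_eq_iff_eqAC {σ : Type} [LinearOrder σ] (A C : Set σ)
    [DecidablePred (· ∈ A)] [DecidablePred (· ∈ C)] (f₁ f₂ : List (RTree σ)) :
    nfCF C (phiF A none f₁) = nfCF C (phiF A none f₂) ↔ EqAC A C f₁ f₂ := by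
  have hnf (f : List (RTree σ)) : EqAC A C (nfCF C (phiF A none f)) f :=
    (eqAC_nfCF A C _).trans (eqAC_phiF_none A C f)
  exact ⟨fun h => (hnf f₁).symm.trans (h ▸ hnf f₂), nfCF_phiF_none_eq_of_eqAC A C⟩
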